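/- If S ⊆ ℤ is finite with |S| = k ≥ 1, then the covering multiplicity κ(S) = τ(S)·k satisfies κ(S) ≤ H_k ≤ log k + 1, where τ(S) is the covering density of S in ℤ. -/

import Mathlib

open Pointwise

/-- `τ(S,n)`: the minimal number of integer translates of `S` covering `{1,...,n}`. -/
noncomputable def tauZ (S : Finset ℤ) (n : ℕ) : ℕ :=
  sInf {m | ∃ T : Finset ℤ, T.card = m ∧ Finset.Icc (1 : ℤ) n ⊆ T + S}

/-- The covering density `τ(S)` of a finite set `S ⊂ ℤ`, as the infimum of `τ(S,n)/n`. -/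
noncomputable def covDens (S : Finset ℤ) : ℝ :=
  ⨅ n : ℕ+, (tauZ S n : ℝ) / n

/-! Greedy covering. Let `k = #S` and let `U` be the part of `[1, n]` not yet covered. Every
`x ∈ U` lies in exactly `k` of the translates `c + S` with `c ∈ U - S`, so if `#(U - S) ≤ m k`
some translate covers `t ≥ #U / m` points of `U`. Charging that step to the last `t` terms of
`∑_{i < #U} 1 / (⌊i/m⌋ + 1)`, each at least `1/t`, bounds the greedy cover by this sum, which
equals `m H_k` when `#U = m k`. As `#([1, n] - S) ≤ n + O(1)`, taking `n = m k` and letting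
`m → ∞` gives `τ(S) k ≤ H_k`. -/

open Finset Filter Topology

noncomputable def greedyWeight (m u : ℕ) : ℝ :=
  ∑ i ∈ range u, 1 / (((i / m : ℕ) : ℝ) + 1)

lemma greedyWeight_mono (m : ℕ) : Monotone (greedyWeight m) := fun _ _ h =>
  sum_le_sum_of_subset_of_nonneg (range_subset_range.2 h) fun _ _ _ => by positivity

lemma greedyWeight_mul (m k : ℕ) :
    greedyWeight m (m * k) = m * ∑ j ∈ range k, 1 / ((j : ℝ) + 1) := by
  induction k with
  | zero => simp [greedyWeight]
  | succ k ih =>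
    have hblock :
        ∑ x ∈ range m, 1 / ((((m * k + x) / m : ℕ) : ℝ) + 1) = m * (1 / (k + 1)) := by
      rw [sum_congr rfl fun x hx => ?_, sum_const, card_range, nsmul_eq_mul]
      rw [Nat.add_comm, Nat.add_mul_div_left _ _ (Nat.zero_lt_of_lt (mem_range.1 hx)),
        Nat.div_eq_of_lt (mem_range.1 hx), Nat.zero_add]
    rw [greedyWeight, Nat.mul_succ, sum_range_add, ← greedyWeight, ih, hblock, sum_range_succ,
      mul_add]

lemma greedyWeight_sub_add_one_le {m t u : ℕ} (ht : 0 < t) (htu : t ≤ u) (hu : u ≤ m * t) :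
    greedyWeight m (u - t) + 1 ≤ greedyWeight m u := by
  obtain ⟨v, rfl⟩ : ∃ v, u = v + t := ⟨u - t, by omega⟩
  have hm : 0 < m := Nat.pos_of_mul_pos_right (by omega : 0 < m * t)
  have hterm : ∀ i ∈ range t, 1 / (t : ℝ) ≤ 1 / (((v + i) / m : ℕ) + 1) := fun i hi => by
    have : (v + i) / m < t := (Nat.div_lt_iff_lt_mul hm).2 (by grind)
    gcongr
    exact_mod_cast this
  have hone : (1 : ℝ) ≤ ∑ i ∈ range t, 1 / (((v + i) / m : ℕ) + 1 : ℝ) := by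
    calc (1 : ℝ) = #(range t) • (1 / (t : ℝ)) := by
          rw [card_range, nsmul_eq_mul]; field_simp
      _ ≤ _ := card_nsmul_le_sum _ _ _ hterm
  rw [Nat.add_sub_cancel]
  unfold greedyWeight
  rw [sum_range_add]
  linarith

section Translates

variable {G : Type*} [AddCommGroup G] [DecidableEq G]

lemma sum_card_filter_sub_mem (S U : Finset G) :
    ∑ c ∈ U - S, #{x ∈ U | x - c ∈ S} = #U * #S := by
  have hbelow : ∀ x ∈ U, #{c ∈ U - S | x - c ∈ S} = #S := fun x hx => by
    have : {c ∈ U - S | x - c ∈ S} = S.image (x - ·) := by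
      ext c
      simp only [mem_filter, mem_image]
      constructor
      · rintro ⟨-, hc⟩
        exact ⟨x - c, hc, sub_sub_cancel x c⟩
      · rintro ⟨s, hs, rfl⟩
        exact ⟨sub_mem_sub hx hs, by rwa [sub_sub_cancel]⟩
    rw [this, card_image_of_injective _ sub_right_injective]
  rw [← sum_const_nat hbelow]
  exact sum_card_bipartiteAbove_eq_sum_card_bipartiteBelow (fun c x => x - c ∈ S)

lemma exists_card_le_mul_card_filter_sub_mem {S U : Finset G} {m : ℕ} (hS : S.Nonempty)
    (hU : U.Nonempty) (h : #(U - S) ≤ m * #S) :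
    ∃ c ∈ U - S, #U ≤ m * #{x ∈ U | x - c ∈ S} := by
  apply exists_le_of_sum_le (hU.sub hS)
  rw [sum_const, smul_eq_mul, ← mul_sum, sum_card_filter_sub_mem]
  calc #(U - S) * #U ≤ m * #S * #U := Nat.mul_le_mul_right _ h
    _ = m * (#U * #S) := by ring

theorem exists_subset_add_card_le_greedyWeight {S : Finset G} (hS : S.Nonempty) {m : ℕ}
    (U : Finset G) (hU : #(U - S) ≤ m * #S) :
    ∃ T : Finset G, U ⊆ T + S ∧ (#T : ℝ) ≤ greedyWeight m #U := by
  induction hu : #U using Nat.strong_induction_on generalizing U with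
  | _ u ih =>
    subst hu
    rcases U.eq_empty_or_nonempty with rfl | hUne
    · exact ⟨∅, empty_subset _, by simp [greedyWeight]⟩
    obtain ⟨c, -, hc⟩ := exists_card_le_mul_card_filter_sub_mem hS hUne hU
    set V := {x ∈ U | x - c ∈ S}
    have hVU : V ⊆ U := filter_subset _ _
    have hV : 0 < #V := Nat.pos_of_ne_zero fun h0 => by
      rw [h0, Nat.mul_zero] at hc
      exact hUne.card_pos.ne' (Nat.le_zero.1 hc)
    have hrest : #(U \ V) = #U - #V := card_sdiff_of_subset hVU
    obtain ⟨T, hUT, hT⟩ := ih _ (by have := hUne.card_pos; omega) (U \ V)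
      ((card_le_card (sub_subset_sub_right sdiff_subset)).trans hU) rfl
    refine ⟨insert c T, fun x hx => ?_, ?_⟩
    · by_cases hxc : x - c ∈ S
      · exact mem_add.2 ⟨c, mem_insert_self _ _, x - c, hxc, add_sub_cancel c x⟩
      · exact add_subset_add_right (subset_insert _ _)
          (hUT (mem_sdiff.2 ⟨hx, fun h => hxc (mem_filter.1 h).2⟩))
    · calc (#(insert c T) : ℝ) ≤ #T + 1 := by exact_mod_cast card_insert_le c T
        _ ≤ greedyWeight m (#U - #V) + 1 := by rw [← hrest]; linarith
        _ ≤ greedyWeight m #U := greedyWeight_sub_add_one_le hV (card_le_card hVU) hc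

end Translates

lemma exists_card_Icc_sub_le (S : Finset ℤ) :
    ∃ D : ℕ, ∀ n : ℕ, #(Icc (1 : ℤ) n - S) ≤ n + D := by
  obtain ⟨a, ha⟩ := S.bddBelow
  obtain ⟨b, hb⟩ := S.bddAbove
  refine ⟨(b - a).toNat, fun n => ?_⟩
  have hsub : Icc (1 : ℤ) n - S ⊆ Icc (1 - b) (n - a) := by
    intro x hx
    obtain ⟨y, hy, s, hs, rfl⟩ := mem_sub.1 hx
    have := ha hs
    have := hb hs
    rw [mem_Icc] at hy ⊢
    omega
  have := card_le_card hsub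
  rw [Int.card_Icc] at this
  omega

lemma tauZ_le_card {S T : Finset ℤ} {n : ℕ} (h : Icc (1 : ℤ) n ⊆ T + S) : tauZ S n ≤ #T :=
  Nat.sInf_le ⟨T, rfl, h⟩

lemma covDens_le_tauZ_div (S : Finset ℤ) (n : ℕ+) : covDens S ≤ tauZ S n / n :=
  ciInf_le ⟨0, by rintro _ ⟨n, rfl⟩; positivity⟩ n

lemma exists_tauZ_mul_card_le {S : Finset ℤ} (hS : S.Nonempty) :
    ∃ D : ℕ, ∀ m : ℕ,
      (tauZ S (m * #S) : ℝ) ≤ (m + D) * ∑ j ∈ range #S, 1 / ((j : ℝ) + 1) := by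
  obtain ⟨D, hD⟩ := exists_card_Icc_sub_le S
  refine ⟨D, fun m => ?_⟩
  have hk := hS.card_pos
  have hcard : #(Icc (1 : ℤ) ↑(m * #S) - S) ≤ (m + D) * #S :=
    (hD _).trans (by nlinarith)
  obtain ⟨T, hT, hTcard⟩ := exists_subset_add_card_le_greedyWeight hS _ hcard
  have hIcc : #(Icc (1 : ℤ) ↑(m * #S)) ≤ (m + D) * #S := by
    rw [Int.card_Icc, add_sub_cancel_right, Int.toNat_natCast]
    exact Nat.mul_le_mul_right _ (Nat.le_add_right m D)
  calc (tauZ S (m * #S) : ℝ) ≤ #T := by exact_mod_cast tauZ_le_card hT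
    _ ≤ greedyWeight (m + D) ((m + D) * #S) := hTcard.trans (greedyWeight_mono _ hIcc)
    _ = _ := by rw [greedyWeight_mul]; push_cast; ring

lemma covDens_mul_card_le (S : Finset ℤ) :
    covDens S * #S ≤ ∑ j ∈ range #S, 1 / ((j : ℝ) + 1) := by
  rcases S.eq_empty_or_nonempty with rfl | hS
  · simp
  obtain ⟨D, hD⟩ := exists_tauZ_mul_card_le hS
  set H := ∑ j ∈ range #S, 1 / ((j : ℝ) + 1)
  have hk : (0 : ℝ) < #S := by exact_mod_cast hS.card_pos
  have hbound : ∀ m : ℕ, 0 < m → covDens S * #S ≤ H * (1 + D / m) := fun m hm => by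
    calc covDens S * #S ≤ tauZ S (m * #S) / ((m * #S : ℕ) : ℝ) * #S :=
          mul_le_mul_of_nonneg_right (covDens_le_tauZ_div S ⟨m * #S, by positivity⟩) hk.le
      _ ≤ (m + D) * H / ((m * #S : ℕ) : ℝ) * #S := by gcongr; exact hD m
      _ = H * (1 + D / m) := by push_cast; field_simp
  have hlim : Tendsto (fun m : ℕ => H * (1 + D / m)) atTop (𝓝 H) := by
    simpa using (tendsto_const_div_atTop_nhds_zero_nat (D : ℝ)).const_add 1 |>.const_mul H
  exact ge_of_tendsto hlim ((eventually_gt_atTop 0).mono hbound)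

theorem covering_multiplicity_le_harmonic_general (S : Finset ℤ) (k : ℕ) (hk : S.card = k) :
    covDens S * k ≤ ∑ j ∈ Finset.range k, (1 : ℝ) / (j + 1) ∧
    (∑ j ∈ Finset.range k, (1 : ℝ) / (j + 1)) ≤ Real.log k + 1 := by
  subst hk
  refine ⟨covDens_mul_card_le S, ?_⟩
  simpa [harmonic, one_div, add_comm] using harmonic_le_one_add_log #S

theorem covering_multiplicity_le_harmonic (S : Finset ℤ) (k : ℕ) (hk : S.card = k)
    (hk1 : 1 ≤ k) :
    covDens S * k ≤ ∑ j ∈ Finset.range k, (1 : ℝ) / (j + 1) ∧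
    (∑ j ∈ Finset.range k, (1 : ℝ) / (j + 1)) ≤ Real.log k + 1 :=
  covering_multiplicity_le_harmonic_general S k hk
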